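/- In any symmetric endoadjunction, defining φ'_A = φ_A ∘ χ^{GF}_A and γ'_A = χ^{GF}_A ∘ γ_A, the sextuple ⟨A, A, G, F, φ', γ'⟩ is an adjunction with G left adjoint to F; i.e., the triangular equations φ'_{GA} ∘ G γ'_A = 1_{GA} and F φ'_A ∘ γ'_{FA} = 1_{FA} hold. -/

import Mathlib

/-!
Since `χ^{GF}` is natural (its inverse `χ^{FG}` is the transpose of `Fφ ∘ χ_G` along
`F ⊣ G`), `γ'` and `φ'` are natural transformations. The key identity is that
`κ = Fχ^{GF} ∘ χ^{GF}_F : GFF ≅ FFG` conjugates `χ_G` into `Gχ`; after transposing along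
`F ⊣ G` this is exactly the braid relation. It gives `φ'_F = Fφ' ∘ χ^{GF}_F ∘ Gχ`, hence
`Fφ'_{FA} ∘ γ'_{FFA} = χ_A ∘ χ_A = 1`, and this triangle descends to every object because
`Fγ'_A` is split mono. The other triangle is checked after transposition along `F ⊣ G`.
-/

open CategoryTheory

section

variable {A : Type*} [Category A] (F G : A ⥤ A)
  (φ : ∀ X : A, F.obj (G.obj X) ⟶ X) (γ : ∀ X : A, X ⟶ G.obj (F.obj X))
  (χGF : ∀ X : A, G.obj (F.obj X) ⟶ F.obj (G.obj X))

/-- The natural transformation `χ : FF ⟹ FF` of a symmetric endoadjunction, defined by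
`χ_A = FF(φ_A ∘ χ^{GF}_A) ∘ F χ^{GF}_{FA} ∘ χ^{GF}_{FFA} ∘ γ_{FFA}`. -/
def chiOf (X : A) : F.obj (F.obj X) ⟶ F.obj (F.obj X) :=
  γ (F.obj (F.obj X)) ≫ χGF (F.obj (F.obj X)) ≫ F.map (χGF (F.obj X)) ≫
    F.map (F.map (χGF X ≫ φ X))

/-- The arrow `χ^{FG}_A = GFφ_A ∘ Gχ_{GA} ∘ γ_{FGA} : FGA → GFA`. -/
def chiFGOf (X : A) : F.obj (G.obj X) ⟶ G.obj (F.obj X) :=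
  γ (F.obj (G.obj X)) ≫ G.map (chiOf F G φ γ χGF (G.obj X)) ≫ G.map (F.map (φ X))

section Bijunction

variable {F G}

local notation "χ" => chiOf F G φ γ χGF
local notation "χFG" => chiFGOf F G φ γ χGF

structure IsEndoadjunction : Prop where
  counit_naturality {X Y : A} (f : X ⟶ Y) : F.map (G.map f) ≫ φ Y = φ X ≫ f
  unit_naturality {X Y : A} (f : X ⟶ Y) : γ X ≫ G.map (F.map f) = f ≫ γ Y
  left_triangle_components (X : A) : F.map (γ X) ≫ φ (F.obj X) = 𝟙 (F.obj X)
  right_triangle_components (X : A) : γ (G.obj X) ≫ G.map (φ X) = 𝟙 (G.obj X)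

structure IsSymmetricEndoadjunction : Prop extends IsEndoadjunction φ γ where
  chi_naturality {X Y : A} (f : X ⟶ Y) : F.map (F.map f) ≫ χ Y = χ X ≫ F.map (F.map f)
  chi_comp_chi (X : A) : χ X ≫ χ X = 𝟙 (F.obj (F.obj X))
  chi_braid (X : A) :
    χ (F.obj X) ≫ F.map (χ X) ≫ χ (F.obj X) = F.map (χ X) ≫ χ (F.obj X) ≫ F.map (χ X)
  χGF_comp_chiFG (X : A) : χGF X ≫ χFG X = 𝟙 (G.obj (F.obj X))
  chiFG_comp_χGF (X : A) : χFG X ≫ χGF X = 𝟙 (F.obj (G.obj X))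

def bijunctionUnit (X : A) : X ⟶ F.obj (G.obj X) := γ X ≫ χGF X

def bijunctionCounit (X : A) : G.obj (F.obj X) ⟶ X := χGF X ≫ φ X

variable {φ γ χGF}

theorem chiOf_eq_bijunctionUnit_comp (B : A) :
    χ B = bijunctionUnit γ χGF (F.obj (F.obj B)) ≫
      F.map (χGF (F.obj B) ≫ F.map (bijunctionCounit φ χGF B)) := by
  simp only [chiOf, bijunctionUnit, bijunctionCounit, Functor.map_comp, Category.assoc]

namespace IsEndoadjunction

theorem map_comp_counit_injective (h : IsEndoadjunction φ γ) {B C : A} :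
    Function.Injective fun q : B ⟶ G.obj C => F.map q ≫ φ C := by
  intro q₁ q₂ hq
  have transpose_back (q : B ⟶ G.obj C) : γ B ≫ G.map (F.map q ≫ φ C) = q := by
    rw [G.map_comp, ← Category.assoc, h.unit_naturality, Category.assoc,
      h.right_triangle_components, Category.comp_id]
  rw [← transpose_back q₁, ← transpose_back q₂]
  exact congrArg (fun p => γ B ≫ G.map p) hq

theorem map_chiFG_comp_counit (h : IsEndoadjunction φ γ) (B : A) :
    F.map (χFG B) ≫ φ (F.obj B) = χ (G.obj B) ≫ F.map (φ B) := by
  rw [chiFGOf, ← G.map_comp, F.map_comp, Category.assoc, h.counit_naturality,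
    ← Category.assoc, h.left_triangle_components, Category.id_comp]

end IsEndoadjunction

namespace IsSymmetricEndoadjunction

theorem chiFG_naturality (h : IsSymmetricEndoadjunction φ γ χGF) {B C : A} (f : B ⟶ C) :
    F.map (G.map f) ≫ χFG C = χFG B ≫ G.map (F.map f) := by
  apply h.map_comp_counit_injective
  dsimp only
  rw [F.map_comp, F.map_comp, Category.assoc, Category.assoc, h.map_chiFG_comp_counit,
    h.counit_naturality, reassoc_of% h.map_chiFG_comp_counit, reassoc_of% h.chi_naturality,
    ← F.map_comp, ← F.map_comp, h.counit_naturality]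

theorem χGF_naturality (h : IsSymmetricEndoadjunction φ γ χGF) {B C : A} (f : B ⟶ C) :
    G.map (F.map f) ≫ χGF C = χGF B ≫ F.map (G.map f) := by
  rw [← Category.id_comp (G.map (F.map f)), ← h.χGF_comp_chiFG, Category.assoc, Category.assoc,
    ← reassoc_of% h.chiFG_naturality, h.chiFG_comp_χGF, Category.comp_id]

theorem map_χGF_comp_chi_comp_map_counit (h : IsSymmetricEndoadjunction φ γ χGF) (B : A) :
    F.map (χGF B) ≫ χ (G.obj B) ≫ F.map (φ B) = φ (F.obj B) := by
  rw [← h.map_chiFG_comp_counit, ← F.map_comp_assoc, h.χGF_comp_chiFG, F.map_id,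
    Category.id_comp]

theorem map_counit_eq_chi_comp (h : IsSymmetricEndoadjunction φ γ χGF) (B : A) :
    F.map (φ B) = χ (G.obj B) ≫ F.map (χFG B) ≫ φ (F.obj B) := by
  rw [h.map_chiFG_comp_counit, reassoc_of% h.chi_comp_chi]

theorem map_chi_eq_conj (h : IsSymmetricEndoadjunction φ γ χGF) (B : A) :
    G.map (χ B) =
      χGF (F.obj B) ≫ F.map (χGF B) ≫ χ (G.obj B) ≫ F.map (χFG B) ≫ χFG (F.obj B) := by
  apply h.map_comp_counit_injective
  dsimp only
  rw [h.counit_naturality]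
  simp only [Functor.map_comp, Category.assoc]
  rw [h.map_chiFG_comp_counit, reassoc_of% h.chi_naturality (χFG B),
    ← F.map_comp (F.map (χFG B)), h.map_chiFG_comp_counit, F.map_comp,
    ← reassoc_of% h.chi_braid (G.obj B), ← h.chi_naturality (φ B),
    reassoc_of% h.chi_naturality (χGF B)]
  simp only [← Functor.map_comp_assoc]
  rw [h.map_χGF_comp_chi_comp_map_counit, reassoc_of% h.map_χGF_comp_chi_comp_map_counit]

theorem bijunctionCounit_obj (h : IsSymmetricEndoadjunction φ γ χGF) (B : A) :
    bijunctionCounit φ χGF (F.obj B) =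
      G.map (χ B) ≫ χGF (F.obj B) ≫ F.map (bijunctionCounit φ χGF B) := by
  rw [bijunctionCounit, bijunctionCounit, h.map_chi_eq_conj,
    ← h.map_χGF_comp_chi_comp_map_counit]
  simp only [Category.assoc, reassoc_of% h.chiFG_comp_χGF, Functor.map_comp]
  rw [← F.map_comp_assoc (χFG B), h.chiFG_comp_χGF, F.map_id, Category.id_comp]

theorem bijunctionUnit_naturality (h : IsSymmetricEndoadjunction φ γ χGF) {B C : A}
    (f : B ⟶ C) :
    f ≫ bijunctionUnit γ χGF C = bijunctionUnit γ χGF B ≫ F.map (G.map f) := by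
  rw [bijunctionUnit, bijunctionUnit, ← reassoc_of% h.unit_naturality, h.χGF_naturality,
    Category.assoc]

theorem bijunctionCounit_naturality (h : IsSymmetricEndoadjunction φ γ χGF) {B C : A}
    (f : B ⟶ C) :
    G.map (F.map f) ≫ bijunctionCounit φ χGF C = bijunctionCounit φ χGF B ≫ f := by
  rw [bijunctionCounit, bijunctionCounit, reassoc_of% h.χGF_naturality, h.counit_naturality,
    Category.assoc]

theorem bijunction_right_triangle_components_obj (h : IsSymmetricEndoadjunction φ γ χGF)
    (B : A) :
    bijunctionUnit γ χGF (F.obj (F.obj B)) ≫ F.map (bijunctionCounit φ χGF (F.obj B)) =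
      𝟙 (F.obj (F.obj B)) := by
  rw [h.bijunctionCounit_obj, F.map_comp, ← reassoc_of% h.bijunctionUnit_naturality,
    ← chiOf_eq_bijunctionUnit_comp, h.chi_comp_chi]

theorem bijunction_right_triangle_components (h : IsSymmetricEndoadjunction φ γ χGF) (B : A) :
    bijunctionUnit γ χGF (F.obj B) ≫ F.map (bijunctionCounit φ χGF B) = 𝟙 (F.obj B) := by
  have triangle_naturality {X Y : A} (f : X ⟶ Y) :
      (bijunctionUnit γ χGF (F.obj X) ≫ F.map (bijunctionCounit φ χGF X)) ≫ F.map f =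
        F.map f ≫ bijunctionUnit γ χGF (F.obj Y) ≫ F.map (bijunctionCounit φ χGF Y) := by
    rw [Category.assoc, ← F.map_comp, ← h.bijunctionCounit_naturality, F.map_comp,
      reassoc_of% h.bijunctionUnit_naturality]
  have : Mono (F.map (bijunctionUnit γ χGF B)) := SplitMono.mono
    { retraction := F.map (χFG B) ≫ φ (F.obj B)
      id := by
        rw [← F.map_comp_assoc, bijunctionUnit, Category.assoc, h.χGF_comp_chiFG,
          Category.comp_id, h.left_triangle_components] }
  rw [← cancel_mono (F.map (bijunctionUnit γ χGF B)), triangle_naturality,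
    h.bijunction_right_triangle_components_obj, Category.comp_id, Category.id_comp]

theorem bijunction_left_triangle_components (h : IsSymmetricEndoadjunction φ γ χGF) (B : A) :
    G.map (bijunctionUnit γ χGF B) ≫ bijunctionCounit φ χGF (G.obj B) = 𝟙 (G.obj B) := by
  apply h.map_comp_counit_injective
  dsimp only
  rw [F.map_id, Category.id_comp]
  calc F.map (G.map (bijunctionUnit γ χGF B) ≫ bijunctionCounit φ χGF (G.obj B)) ≫ φ B
      = F.map (G.map (bijunctionUnit γ χGF B)) ≫
          (F.map (χGF (G.obj B)) ≫ χ (G.obj (G.obj B)) ≫ F.map (χFG (G.obj B))) ≫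
            φ (F.obj (G.obj B)) ≫ φ B := by
        rw [bijunctionCounit, F.map_comp, F.map_comp, h.map_counit_eq_chi_comp]
        simp only [Category.assoc]
    _ = F.map (G.map (bijunctionUnit γ χGF B)) ≫ χFG (F.obj (G.obj B)) ≫
          G.map (χ (G.obj B)) ≫ χGF (F.obj (G.obj B)) ≫ φ (F.obj (G.obj B)) ≫ φ B := by
        rw [h.map_chi_eq_conj]
        simp only [Category.assoc, reassoc_of% h.chiFG_comp_χGF]
    _ = F.map (G.map (bijunctionUnit γ χGF B)) ≫ χFG (F.obj (G.obj B)) ≫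
          G.map (χ (G.obj B) ≫ F.map (φ B)) ≫ bijunctionCounit φ χGF B := by
        rw [← h.counit_naturality (φ B), ← reassoc_of% h.χGF_naturality (φ B), G.map_comp,
          bijunctionCounit, Category.assoc]
    _ = χFG B ≫ G.map (F.map (γ B)) ≫ G.map (φ (F.obj B)) ≫
          bijunctionCounit φ χGF B := by
        rw [← h.map_chiFG_comp_counit, G.map_comp, Category.assoc,
          ← reassoc_of% h.chiFG_naturality, ← F.map_comp_assoc, ← G.map_comp, bijunctionUnit,
          Category.assoc, h.χGF_comp_chiFG, Category.comp_id, reassoc_of% h.chiFG_naturality]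
    _ = φ B := by
        rw [← G.map_comp_assoc, h.left_triangle_components, G.map_id, Category.id_comp,
          bijunctionCounit, reassoc_of% h.chiFG_comp_χGF]

end IsSymmetricEndoadjunction

end Bijunction

theorem symmetricEndoadjunction_bijunction
    (hφ : ∀ {X Y : A} (f : X ⟶ Y), F.map (G.map f) ≫ φ Y = φ X ≫ f)
    (hγ : ∀ {X Y : A} (f : X ⟶ Y), γ X ≫ G.map (F.map f) = f ≫ γ Y)
    (htr₁ : ∀ X : A, F.map (γ X) ≫ φ (F.obj X) = 𝟙 (F.obj X))
    (htr₂ : ∀ X : A, γ (G.obj X) ≫ G.map (φ X) = 𝟙 (G.obj X))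
    (hχnat : ∀ {X Y : A} (f : X ⟶ Y),
      F.map (F.map f) ≫ chiOf F G φ γ χGF Y = chiOf F G φ γ χGF X ≫ F.map (F.map f))
    (hχχ : ∀ X : A, chiOf F G φ γ χGF X ≫ chiOf F G φ γ χGF X = 𝟙 (F.obj (F.obj X)))
    (hχχχ : ∀ X : A,
      chiOf F G φ γ χGF (F.obj X) ≫ F.map (chiOf F G φ γ χGF X) ≫
          chiOf F G φ γ χGF (F.obj X) =
        F.map (chiOf F G φ γ χGF X) ≫ chiOf F G φ γ χGF (F.obj X) ≫
          F.map (chiOf F G φ γ χGF X))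
    (hinv₁ : ∀ X : A, χGF X ≫ chiFGOf F G φ γ χGF X = 𝟙 (G.obj (F.obj X)))
    (hinv₂ : ∀ X : A, chiFGOf F G φ γ χGF X ≫ χGF X = 𝟙 (F.obj (G.obj X)))
    (X : A) :
    G.map (γ X ≫ χGF X) ≫ (χGF (G.obj X) ≫ φ (G.obj X)) = 𝟙 (G.obj X) ∧
      (γ (F.obj X) ≫ χGF (F.obj X)) ≫ F.map (χGF X ≫ φ X) = 𝟙 (F.obj X) := by
  have h : IsSymmetricEndoadjunction φ γ χGF :=
    { counit_naturality := hφ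
      unit_naturality := hγ
      left_triangle_components := htr₁
      right_triangle_components := htr₂
      chi_naturality := hχnat
      chi_comp_chi := hχχ
      chi_braid := hχχχ
      χGF_comp_chiFG := hinv₁
      chiFG_comp_χGF := hinv₂ }
  exact ⟨h.bijunction_left_triangle_components X, h.bijunction_right_triangle_components X⟩

end
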